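/- arXiv:math/0702216 — 7 statements merged into one kernel-verified Lean document; each statement's English description precedes it below -/
import Mathlib

section
/- Let {e_i}_{i∈ℕ} be an orthonormal basis of a Hilbert space H and define f_i = (e_i + e_{i+1})/√2. Then there exists ε₀ > 0 such that for all 0 < ε < ε₀, the sequence {f_i}_{i∈ℕ} is not an ε-perturbation of any sequence possessing a finite orthogonal decomposition; i.e., there is no sequence {g_i}_{i∈ℕ} with Σ_i ‖f_i − g_i‖² ≤ ε that admits a partition of ℕ into finite sets whose spans under {g_i} are mutually orthogonal. -/
/-!
Consecutive vectors `fᵢ, fᵢ₊₁` have inner product `1/2`, and an `ε`-perturbation with small `ε`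
moves each vector by less than `1/10`, so consecutive perturbed vectors `gᵢ, gᵢ₊₁` are still
not orthogonal. Hence each `gᵢ₊₁` lies in the same block of an orthogonal decomposition as `gᵢ`,
and the block containing `g₀` contains every index, so it cannot be finite.
-/

open scoped InnerProductSpace
open Submodule Topology TopologicalSpace

noncomputable section

variable {H : Type} [NormedAddCommGroup H] [InnerProductSpace ℂ H] [CompleteSpace H]

/-- `f` is a Bessel sequence with bound `B`. -/
def IsBessel {H : Type} [NormedAddCommGroup H] [InnerProductSpace ℂ H]
    {I : Type} (f : I → H) (B : ℝ) : Prop :=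
  ∀ g : H, ∀ s : Finset I, ∑ i ∈ s, ‖⟪g, f i⟫_ℂ‖ ^ 2 ≤ B * ‖g‖ ^ 2

/-- `f` is a Riesz basic sequence (a Riesz basis for its closed span). -/
def IsRieszBasic {H : Type} [NormedAddCommGroup H] [InnerProductSpace ℂ H]
    {I : Type} (f : I → H) : Prop :=
  ∃ A B : ℝ, 0 < A ∧ A ≤ B ∧ ∀ c : I → ℂ, Summable (fun i => ‖c i‖ ^ 2) →
    ∃ v : H, HasSum (fun i => c i • f i) v ∧
      A * ∑' i, ‖c i‖ ^ 2 ≤ ‖v‖ ^ 2 ∧ ‖v‖ ^ 2 ≤ B * ∑' i, ‖c i‖ ^ 2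

/-- `f` is a frame for its closed linear span. -/
def IsFrameSequence {H : Type} [NormedAddCommGroup H] [InnerProductSpace ℂ H]
    {I : Type} (f : I → H) : Prop :=
  ∃ A B : ℝ, 0 < A ∧ A ≤ B ∧
    ∀ g ∈ closure ((span ℂ (Set.range f) : Submodule ℂ H) : Set H),
      Summable (fun i => ‖⟪g, f i⟫_ℂ‖ ^ 2) ∧
      A * ‖g‖ ^ 2 ≤ ∑' i, ‖⟪g, f i⟫_ℂ‖ ^ 2 ∧
      ∑' i, ‖⟪g, f i⟫_ℂ‖ ^ 2 ≤ B * ‖g‖ ^ 2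

/-- `f` is ω-independent for ℓ₂-sequences. -/
def IsOmegaIndep {H : Type} [NormedAddCommGroup H] [InnerProductSpace ℂ H]
    {I : Type} (f : I → H) : Prop :=
  ∀ c : I → ℂ, Summable (fun i => ‖c i‖ ^ 2) →
    HasSum (fun i => c i • f i) 0 → ∀ i, c i = 0

/-- `g` possesses a finite orthogonal decomposition: the index set partitions into
finite sets whose spans are mutually orthogonal. -/
def HasFiniteOrthDecomp {H : Type} [NormedAddCommGroup H] [InnerProductSpace ℂ H]
    {I : Type} (g : I → H) : Prop :=
  ∃ P : ℕ → Set I, (∀ i, ∃! j, i ∈ P j) ∧ (∀ j, (P j).Finite) ∧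
    ∀ j k, j ≠ k → ∀ x ∈ span ℂ (g '' P j), ∀ y ∈ span ℂ (g '' P k), ⟪x, y⟫_ℂ = 0

theorem HasFiniteOrthDecomp.exists_inner_succ_eq_zero {E : Type} [NormedAddCommGroup E]
    [InnerProductSpace ℂ E] {g : ℕ → E} (hg : HasFiniteOrthDecomp g) :
    ∃ i, ⟪g i, g (i + 1)⟫_ℂ = 0 := by
  obtain ⟨P, hcover, hfin, horth⟩ := hg
  choose block mem_block _ using hcover
  by_contra! hne
  have block_succ : ∀ i, block (i + 1) = block i := fun i => by
    by_contra hij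
    exact hne i (horth _ _ (Ne.symm hij) _ (subset_span ⟨i, mem_block i, rfl⟩)
      _ (subset_span ⟨i + 1, mem_block (i + 1), rfl⟩))
  have block_eq : ∀ i, block i = block 0 := fun i => by
    induction i with
    | zero => rfl
    | succ n ih => rw [block_succ n, ih]
  exact Set.infinite_univ ((hfin (block 0)).subset fun i _ => block_eq i ▸ mem_block i)

theorem norm_inner_sub_inner_le {𝕜 E : Type*} [RCLike 𝕜] [SeminormedAddCommGroup E]
    [InnerProductSpace 𝕜 E] (x y x' y' : E) :
    ‖⟪x', y'⟫_𝕜 - ⟪x, y⟫_𝕜‖ ≤ ‖x' - x‖ * ‖y'‖ + ‖x‖ * ‖y' - y‖ := by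
  have hsplit : ⟪x', y'⟫_𝕜 - ⟪x, y⟫_𝕜 = ⟪x' - x, y'⟫_𝕜 + ⟪x, y' - y⟫_𝕜 := by
    rw [inner_sub_left, inner_sub_right]; ring
  rw [hsplit]
  exact (norm_add_le _ _).trans (add_le_add (norm_inner_le_norm _ _) (norm_inner_le_norm _ _))

theorem inner_ne_zero_of_norm_sub_le {𝕜 E : Type*} [RCLike 𝕜] [SeminormedAddCommGroup E]
    [InnerProductSpace 𝕜 E] {x y x' y' : E} {δ : ℝ} (hx : ‖x‖ ≤ 1) (hy : ‖y‖ ≤ 1)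
    (hxx' : ‖x' - x‖ ≤ δ) (hyy' : ‖y' - y‖ ≤ δ) (hxy : δ * (2 + δ) < ‖⟪x, y⟫_𝕜‖) :
    ⟪x', y'⟫_𝕜 ≠ 0 := by
  intro h0
  have hδ : 0 ≤ δ := (norm_nonneg _).trans hxx'
  have hy' : ‖y'‖ ≤ 1 + δ := (norm_le_norm_add_norm_sub' y' y).trans (add_le_add hy hyy')
  have : ‖⟪x, y⟫_𝕜‖ ≤ δ * (2 + δ) := calc
    ‖⟪x, y⟫_𝕜‖ = ‖⟪x', y'⟫_𝕜 - ⟪x, y⟫_𝕜‖ := by rw [h0, zero_sub, norm_neg]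
    _ ≤ ‖x' - x‖ * ‖y'‖ + ‖x‖ * ‖y' - y‖ := norm_inner_sub_inner_le x y x' y'
    _ ≤ δ * (1 + δ) + 1 * δ := add_le_add (mul_le_mul hxx' hy' (norm_nonneg _) hδ)
      (mul_le_mul hx hyy' (norm_nonneg _) zero_le_one)
    _ = δ * (2 + δ) := by ring
  exact this.not_gt hxy

section Orthonormal

variable {ι E : Type*} [NormedAddCommGroup E] [InnerProductSpace ℂ E] {e : ι → E}

theorem Orthonormal.norm_inv_sqrt_two_smul_add (he : Orthonormal ℂ e) {i j : ι} (hij : i ≠ j) :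
    ‖((Real.sqrt 2 : ℂ))⁻¹ • (e i + e j)‖ = 1 := by
  have hsq : ‖e i + e j‖ * ‖e i + e j‖ = 2 := by
    rw [norm_add_sq_eq_norm_sq_add_norm_sq_of_inner_eq_zero _ _ (he.inner_eq_zero hij),
      he.norm_eq_one, he.norm_eq_one]
    norm_num
  have hnorm : ‖e i + e j‖ = Real.sqrt 2 := by
    rw [← hsq, Real.sqrt_mul_self (norm_nonneg _)]
  rw [norm_smul, norm_inv, Complex.norm_real, Real.norm_of_nonneg (Real.sqrt_nonneg 2), hnorm,
    inv_mul_cancel₀ (by positivity)]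

theorem Orthonormal.inner_inv_sqrt_two_smul_add (he : Orthonormal ℂ e) {i j k : ι}
    (hij : i ≠ j) (hik : i ≠ k) (hjk : j ≠ k) :
    ⟪((Real.sqrt 2 : ℂ))⁻¹ • (e i + e j), ((Real.sqrt 2 : ℂ))⁻¹ • (e j + e k)⟫_ℂ = 1 / 2 := by
  have hsum : ⟪e i + e j, e j + e k⟫_ℂ = 1 := by
    simp only [inner_add_left, inner_add_right, he.inner_eq_zero hij, he.inner_eq_zero hik,
      he.inner_eq_zero hjk, inner_self_eq_norm_sq_to_K, he.norm_eq_one]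
    norm_num
  have hsqrt : ((Real.sqrt 2 : ℂ)) * (Real.sqrt 2 : ℂ) = 2 := by
    rw [← Complex.ofReal_mul, Real.mul_self_sqrt zero_le_two]; norm_num
  rw [inner_smul_left, inner_smul_right, hsum, map_inv₀, Complex.conj_ofReal, mul_one,
    ← mul_inv, hsqrt, one_div]

end Orthonormal

theorem stmt3_general (e : ℕ → H) (he : Orthonormal ℂ e)
    (f : ℕ → H) (hf : ∀ i, f i = ((Real.sqrt 2 : ℂ))⁻¹ • (e i + e (i + 1))) :
    ∃ ε₀ > 0, ∀ ε : ℝ, 0 < ε → ε < ε₀ →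
      ¬ ∃ g : ℕ → H,
          (∀ i, g i ∈ closure ((span ℂ (Set.range f) : Submodule ℂ H) : Set H)) ∧
          Summable (fun i => ‖f i - g i‖ ^ 2) ∧
          (∑' i, ‖f i - g i‖ ^ 2) ≤ ε ∧
          HasFiniteOrthDecomp g := by
  refine ⟨1 / 100, by norm_num, fun ε _ hε => ?_⟩
  rintro ⟨g, -, hsum, hsum_le, hdecomp⟩
  obtain ⟨i, hi⟩ := hdecomp.exists_inner_succ_eq_zero
  have hclose : ∀ j, ‖g j - f j‖ ≤ 1 / 10 := fun j => by
    rw [norm_sub_rev, ← pow_le_pow_iff_left₀ (norm_nonneg _) (by norm_num) two_ne_zero]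
    linarith [hsum.le_tsum j fun k _ => sq_nonneg ‖f k - g k‖]
  have hnorm : ∀ j, ‖f j‖ ≤ 1 := fun j =>
    (hf j ▸ he.norm_inv_sqrt_two_smul_add (by omega)).le
  have hinner : ‖⟪f i, f (i + 1)⟫_ℂ‖ = 1 / 2 := by
    rw [hf, hf, he.inner_inv_sqrt_two_smul_add (by omega) (by omega) (by omega)]
    norm_num
  refine inner_ne_zero_of_norm_sub_le (hnorm i) (hnorm (i + 1)) (hclose i) (hclose (i + 1)) ?_ hi
  rw [hinner]
  norm_num

theorem stmt3 (e : ℕ → H) (he : Orthonormal ℂ e)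
    (hspan : closure ((span ℂ (Set.range e) : Submodule ℂ H) : Set H) = Set.univ)
    (f : ℕ → H) (hf : ∀ i, f i = ((Real.sqrt 2 : ℂ))⁻¹ • (e i + e (i + 1))) :
    ∃ ε₀ > 0, ∀ ε : ℝ, 0 < ε → ε < ε₀ →
      ¬ ∃ g : ℕ → H,
          (∀ i, g i ∈ closure ((span ℂ (Set.range f) : Submodule ℂ H) : Set H)) ∧
          Summable (fun i => ‖f i - g i‖ ^ 2) ∧
          (∑' i, ‖f i - g i‖ ^ 2) ≤ ε ∧
          HasFiniteOrthDecomp g :=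
  stmt3_general e he f hf
end
end

section
/- Let {e_i} be an orthonormal basis of a Hilbert space H, let ε > 0 be small, and suppose ℕ is partitioned into finite sets {I_j}_{j=1}^∞. Let i₀ ∈ ℕ be such that i₀ ∈ I_j and i₀+1 ∈ I_k with j ≠ k. If f_i = (e_i + e_{i+1})/√2 and {g_i} satisfies ‖f_{i₀} − g_{i₀}‖ < √ε, ‖f_{i₀+1} − g_{i₀+1}‖ < √ε, and g_{i₀} ⊥ g_{i₀+1}, then √2(1 − √ε) ≤ 1 + 2√ε; in particular, such g cannot exist when ε is small enough that √2(1 − √ε) > 1 + 2√ε. -/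
open scoped InnerProductSpace
open Submodule Topology TopologicalSpace

noncomputable section

variable {H : Type} [NormedAddCommGroup H] [InnerProductSpace ℂ H] [CompleteSpace H]

/-!
The vectors `f i₀` and `f (i₀ + 1)` are unit vectors at distance `1`. Orthogonal vectors of norm
at least `1 - √ε` are at distance at least `√2 (1 - √ε)`, while perturbing each of `f i₀` and
`f (i₀ + 1)` by less than `√ε` changes their distance by less than `2√ε`.
-/

section
variable {𝕜 E : Type*} [RCLike 𝕜] [NormedAddCommGroup E] [InnerProductSpace 𝕜 E]

theorem norm_sub_sq_eq_norm_sq_add_norm_sq_of_inner_eq_zero {x y : E} (h : ⟪x, y⟫_𝕜 = 0) :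
    ‖x - y‖ ^ 2 = ‖x‖ ^ 2 + ‖y‖ ^ 2 := by
  rw [@norm_sub_sq 𝕜, h, map_zero, mul_zero, sub_zero]

theorem sqrt_two_mul_le_norm_sub_of_inner_eq_zero {x y : E} (h : ⟪x, y⟫_𝕜 = 0) {c : ℝ}
    (hx : c ≤ ‖x‖) (hy : c ≤ ‖y‖) : √2 * c ≤ ‖x - y‖ := by
  rcases le_or_gt c 0 with hc | hc
  · nlinarith [norm_nonneg (x - y), Real.sqrt_nonneg 2]
  · rw [← Real.sqrt_sq (norm_nonneg (x - y)), norm_sub_sq_eq_norm_sq_add_norm_sq_of_inner_eq_zero h,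
      ← Real.sqrt_sq hc.le, ← Real.sqrt_mul zero_le_two]
    gcongr
    nlinarith

theorem sqrt_two_mul_one_sub_le_of_inner_eq_zero {u v x y : E} (hu : ‖u‖ = 1) (hv : ‖v‖ = 1)
    (hxy : ⟪x, y⟫_𝕜 = 0) {δ : ℝ} (hx : ‖u - x‖ ≤ δ) (hy : ‖v - y‖ ≤ δ) :
    √2 * (1 - δ) ≤ ‖u - v‖ + 2 * δ := by
  have hx' : 1 - δ ≤ ‖x‖ := by linarith [hu ▸ norm_sub_norm_le u x]
  have hy' : 1 - δ ≤ ‖y‖ := by linarith [hv ▸ norm_sub_norm_le v y]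
  calc √2 * (1 - δ) ≤ ‖x - y‖ := sqrt_two_mul_le_norm_sub_of_inner_eq_zero hxy hx' hy'
    _ = ‖(x - u) + (u - v) + (v - y)‖ := by congr 1; abel
    _ ≤ ‖x - u‖ + ‖u - v‖ + ‖v - y‖ := norm_add₃_le
    _ ≤ ‖u - v‖ + 2 * δ := by rw [norm_sub_rev x u]; linarith

theorem Orthonormal.norm_add_eq_sqrt_two {ι : Type*} {e : ι → E} (he : Orthonormal 𝕜 e) {i j : ι}
    (hij : i ≠ j) : ‖e i + e j‖ = √2 := by
  rw [← Real.sqrt_sq (norm_nonneg _), @norm_add_sq 𝕜, he.2 hij, he.1 i, he.1 j]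
  norm_num

theorem Orthonormal.norm_sub_eq_sqrt_two {ι : Type*} {e : ι → E} (he : Orthonormal 𝕜 e) {i j : ι}
    (hij : i ≠ j) : ‖e i - e j‖ = √2 := by
  rw [← Real.sqrt_sq (norm_nonneg _), norm_sub_sq_eq_norm_sq_add_norm_sq_of_inner_eq_zero (he.2 hij),
    he.1 i, he.1 j]
  norm_num

end

theorem norm_inv_sqrt_two_smul {E : Type*} [NormedAddCommGroup E] [NormedSpace ℂ E] (z : E) :
    ‖((√2 : ℂ))⁻¹ • z‖ = ‖z‖ / √2 := by
  rw [norm_smul, norm_inv, Complex.norm_real, Real.norm_of_nonneg (Real.sqrt_nonneg 2),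
    inv_mul_eq_div]

theorem stmt4_general (e : ℕ → H) (he : Orthonormal ℂ e) (ε : ℝ)
    (i₀ : ℕ)
    (f g : ℕ → H) (hf : ∀ i, f i = ((Real.sqrt 2 : ℂ))⁻¹ • (e i + e (i + 1)))
    (h1 : ‖f i₀ - g i₀‖ < Real.sqrt ε)
    (h2 : ‖f (i₀ + 1) - g (i₀ + 1)‖ < Real.sqrt ε)
    (horth : ⟪g i₀, g (i₀ + 1)⟫_ℂ = 0) :
    Real.sqrt 2 * (1 - Real.sqrt ε) ≤ 1 + 2 * Real.sqrt ε := by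
  have hsqrt2 : √2 ≠ 0 := by positivity
  have hf_norm (i : ℕ) : ‖f i‖ = 1 := by
    rw [hf, norm_inv_sqrt_two_smul, he.norm_add_eq_sqrt_two (by omega), div_self hsqrt2]
  have hf_dist : ‖f i₀ - f (i₀ + 1)‖ = 1 := by
    have : f i₀ - f (i₀ + 1) = ((√2 : ℂ))⁻¹ • (e i₀ - e (i₀ + 2)) := by
      rw [hf, hf, ← smul_sub, add_comm (e i₀), add_sub_add_left_eq_sub]
    rw [this, norm_inv_sqrt_two_smul, he.norm_sub_eq_sqrt_two (by omega), div_self hsqrt2]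
  simpa [hf_dist] using
    sqrt_two_mul_one_sub_le_of_inner_eq_zero (hf_norm _) (hf_norm _) horth h1.le h2.le

theorem stmt4 (e : ℕ → H) (he : Orthonormal ℂ e) (ε : ℝ) (hε : 0 < ε)
    (Pa : ℕ → Set ℕ) (hpart : ∀ i, ∃! j, i ∈ Pa j) (hfin : ∀ j, (Pa j).Finite)
    (i₀ j k : ℕ) (hij : i₀ ∈ Pa j) (hik : i₀ + 1 ∈ Pa k) (hjk : j ≠ k)
    (f g : ℕ → H) (hf : ∀ i, f i = ((Real.sqrt 2 : ℂ))⁻¹ • (e i + e (i + 1)))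
    (h1 : ‖f i₀ - g i₀‖ < Real.sqrt ε)
    (h2 : ‖f (i₀ + 1) - g (i₀ + 1)‖ < Real.sqrt ε)
    (horth : ⟪g i₀, g (i₀ + 1)⟫_ℂ = 0) :
    Real.sqrt 2 * (1 - Real.sqrt ε) ≤ 1 + 2 * Real.sqrt ε :=
  stmt4_general e he ε i₀ f g hf h1 h2 horth
end
end

section
/- Every unit norm Bessel sequence which is finitely linearly independent (every finite subfamily is linearly independent) can be partitioned into two subsets each of which is ω-independent for ℓ₂-sequences. -/
open scoped InnerProductSpace
open Submodule Topology TopologicalSpace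

noncomputable section

variable {H : Type} [NormedAddCommGroup H] [InnerProductSpace ℂ H] [CompleteSpace H]

/-!
Let `K ⊆ ℓ²(I)` be the closed space of ℓ²-relations of `f` and `xᵢ ∈ K` the projection of the
`i`-th unit vector, so that `⟪xᵢ, d⟫ = dᵢ` for `d ∈ K`. A relation supported in `P` is then
orthogonal to every `xⱼ` with `j ∉ P`, so the subfamily indexed by `P` is ω-independent as soon
as every `xᵢ` lies in the closed span of `{xⱼ : j ∉ P}`. Finite linear independence says that no
nonzero relation is finitely supported, i.e. `{xⱼ : j ∉ S}` is total in `K` for every finite `S`.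
Enumerating all triples (side, index, precision) and choosing for each a fresh finite block of
indices whose `x`'s approximate the current `xᵢ` to that precision, the blocks of one side give a
set `A` such that every `xᵢ` lies in the closed span of both `{xⱼ : j ∈ A}` and `{xⱼ : j ∉ A}`.
-/

open Function

section DisjointSequence

variable {I α : Type*}

lemma exists_pairwise_disjoint_finset_seq {P : α → Finset I → Prop}
    (hP : ∀ (S : Finset I) (a : α), ∃ G, Disjoint G S ∧ P a G) (t : ℕ → α) :
    ∃ G : ℕ → Finset I, Pairwise (Disjoint on G) ∧ ∀ n, P (t n) (G n) := by
  classical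
  choose g hgS hgP using hP
  let U : ℕ → Finset I := fun n => Nat.rec ∅ (fun k S => S ∪ g S (t k)) n
  have hU : Monotone U := monotone_nat_of_le_succ fun n => Finset.subset_union_left
  refine ⟨fun n => g (U n) (t n), (pairwise_disjoint_on _).2 fun m n hmn => ?_, fun n => hgP _ _⟩
  exact ((hgS _ _).mono_right (Finset.subset_union_right.trans (hU hmn))).symm

end DisjointSequence

section Partition

variable {𝕜 M I : Type*} [Semiring 𝕜] [AddCommMonoid M] [Module 𝕜 M] [PseudoMetricSpace M]
  {x : I → M}

lemma exists_finset_disjoint_dist_lt {S : Finset I} {z : M}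
    (hz : z ∈ closure (span 𝕜 (x '' (↑S)ᶜ) : Set M)) {ε : ℝ} (hε : 0 < ε) :
    ∃ G : Finset I, Disjoint G S ∧ ∃ y ∈ span 𝕜 (x '' G), dist z y < ε := by
  obtain ⟨y, hy, hzy⟩ := Metric.mem_closure_iff.1 hz ε hε
  obtain ⟨l, hl, rfl⟩ := (Finsupp.mem_span_image_iff_linearCombination 𝕜).1 hy
  refine ⟨l.support, Finset.disjoint_left.2 fun i hi hiS => hl hi hiS, _, ?_, hzy⟩
  exact (Finsupp.mem_span_image_iff_linearCombination 𝕜).2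
    ⟨l, (Finsupp.mem_supported 𝕜 l).2 subset_rfl, rfl⟩

theorem exists_set_mem_closure_span_and_compl [Countable I]
    (hx : ∀ (S : Finset I) (i : I), x i ∈ closure (span 𝕜 (x '' (↑S)ᶜ) : Set M)) :
    ∃ A : Set I, ∀ i, x i ∈ closure (span 𝕜 (x '' A) : Set M) ∧
      x i ∈ closure (span 𝕜 (x '' Aᶜ) : Set M) := by
  rcases isEmpty_or_nonempty I with hI | hI
  · exact ⟨∅, fun i => isEmptyElim i⟩
  obtain ⟨e, he⟩ := exists_surjective_nat (Bool × I × ℕ)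
  have step : ∀ (S : Finset I) (a : Bool × I × ℕ), ∃ G : Finset I, Disjoint G S ∧
      ∃ y ∈ span 𝕜 (x '' G), dist (x a.2.1) y < 1 / ((a.2.2 : ℝ) + 1) :=
    fun S a => exists_finset_disjoint_dist_lt (hx S a.2.1) Nat.one_div_pos_of_nat
  obtain ⟨G, hGdisj, hG⟩ := exists_pairwise_disjoint_finset_seq step e
  set A : Set I := ⋃ (n) (_ : (e n).1 = true), ↑(G n)
  have hA : ∀ n, (e n).1 = true → (G n : Set I) ⊆ A := fun n hn =>
    Set.subset_biUnion_of_mem (u := fun n => (G n : Set I)) hn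
  have hAc : ∀ n, (e n).1 = false → (G n : Set I) ⊆ Aᶜ := by
    intro n hn j hjn hjA
    obtain ⟨m, hm, hjm⟩ := Set.mem_iUnion₂.1 hjA
    have hmn : m ≠ n := by rintro rfl; simp [hm] at hn
    exact Finset.disjoint_left.1 (hGdisj hmn) hjm hjn
  have mem_closure : ∀ (b : Bool) (T : Set I), (∀ n, (e n).1 = b → (G n : Set I) ⊆ T) →
      ∀ i, x i ∈ closure (span 𝕜 (x '' T) : Set M) := by
    intro b T hT i
    refine Metric.mem_closure_iff.2 fun ε hε => ?_
    obtain ⟨m, hm⟩ := exists_nat_one_div_lt hε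
    obtain ⟨n, hn⟩ := he (b, i, m)
    obtain ⟨y, hy, hxy⟩ := hG n
    rw [hn] at hxy
    exact ⟨y, span_mono (Set.image_mono (hT n (by rw [hn]))) hy, hxy.trans hm⟩
  exact ⟨A, fun i => ⟨mem_closure true A hA i, mem_closure false Aᶜ hAc i⟩⟩

end Partition

section Orthogonal

variable {𝕜 E : Type*} [RCLike 𝕜] [NormedAddCommGroup E] [InnerProductSpace 𝕜 E]

theorem Submodule.mem_orthogonal_span_iff {s : Set E} {v : E} :
    v ∈ (span 𝕜 s)ᗮ ↔ ∀ u ∈ s, ⟪u, v⟫_𝕜 = 0 := by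
  refine ⟨fun h u hu => inner_right_of_mem_orthogonal (subset_span hu) h, fun h => ?_⟩
  refine (mem_orthogonal _ v).2 fun u hu => mem_orthogonal_singleton_iff_inner_left.1 ?_
  exact span_le.2 (fun w hw => mem_orthogonal_singleton_iff_inner_left.2 (h w hw)) hu

theorem inner_eq_zero_of_mem_closure_span {s : Set E} {v y : E} (hv : ∀ u ∈ s, ⟪u, v⟫_𝕜 = 0)
    (hy : y ∈ closure (span 𝕜 s : Set E)) : ⟪y, v⟫_𝕜 = 0 :=
  (orthogonal_closure' (span 𝕜 s) v).1
    (fun _ hu => (mem_orthogonal _ v).1 (mem_orthogonal_span_iff.2 hv) _ hu) y hy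

end Orthogonal

section ProjectionOfSingle

variable {I : Type} (K : Submodule ℂ (lp (fun _ : I => ℂ) 2)) [CompleteSpace K]

open scoped Classical in
def projSingle (i : I) : K :=
  K.orthogonalProjectionOnto (lp.single 2 i 1)

theorem inner_projSingle (i : I) (d : K) :
    ⟪projSingle K i, d⟫_ℂ = (d : lp (fun _ : I => ℂ) 2) i := by
  classical
  simp [projSingle, lp.inner_single_left]

theorem projSingle_mem_closure_span_compl
    (hK : ∀ c ∈ K, ∀ S : Finset I, (∀ i ∉ S, c i = 0) → c = 0) (S : Finset I) (i : I) :
    projSingle K i ∈ closure (span ℂ (projSingle K '' (↑S)ᶜ) : Set K) := by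
  have hbot : (span ℂ (projSingle K '' (↑S)ᶜ))ᗮ = ⊥ := by
    refine (Submodule.eq_bot_iff _).2 fun d hd => Subtype.ext (hK d d.2 S fun j hj => ?_)
    rw [← inner_projSingle K]
    exact mem_orthogonal_span_iff.1 hd _ ⟨j, hj, rfl⟩
  rw [← Submodule.topologicalClosure_coe, Submodule.topologicalClosure_eq_top_iff.2 hbot]
  trivial

theorem coe_eq_zero_of_projSingle_mem_closure (d : K) {T : Set I}
    (hT : ∀ j ∈ T, (d : lp (fun _ : I => ℂ) 2) j = 0) {i : I}
    (hi : projSingle K i ∈ closure (span ℂ (projSingle K '' T) : Set K)) :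
    (d : lp (fun _ : I => ℂ) 2) i = 0 := by
  rw [← inner_projSingle K]
  refine inner_eq_zero_of_mem_closure_span ?_ hi
  rintro _ ⟨j, hj, rfl⟩
  rw [inner_projSingle K, hT j hj]

end ProjectionOfSingle

section Bessel

variable {E I : Type} [NormedAddCommGroup E] [InnerProductSpace ℂ E] {f : I → E} {B : ℝ}

theorem IsBessel.memℓp_inner (hf : IsBessel f B) (g : E) : Memℓp (fun i => ⟪f i, g⟫_ℂ) 2 :=
  memℓp_gen' (C := B * ‖g‖ ^ 2) fun s => by simpa [norm_inner_symm] using hf g s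

def IsBessel.analysis (hf : IsBessel f B) (g : E) : lp (fun _ : I => ℂ) 2 :=
  ⟨_, hf.memℓp_inner g⟩

theorem IsBessel.inner_analysis_eq_of_hasSum (hf : IsBessel f B)
    {c : lp (fun _ : I => ℂ) 2} {v : E} (hc : HasSum (fun i => c i • f i) v) (g : E) :
    ⟪hf.analysis g, c⟫_ℂ = ⟪g, v⟫_ℂ := by
  refine (lp.hasSum_inner _ _).unique ?_
  convert hc.mapL (innerSL ℂ g) using 1
  · ext i
    simp [IsBessel.analysis, mul_comm]
  · simp

/-- The kernel of the synthesis operator `c ↦ ∑ cᵢ fᵢ`, taken as the orthogonal complement of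
the range of the analysis operator so that it is closed without any boundedness argument. -/
def IsBessel.relations (hf : IsBessel f B) : Submodule ℂ (lp (fun _ : I => ℂ) 2) :=
  (span ℂ (Set.range hf.analysis))ᗮ

instance (hf : IsBessel f B) : CompleteSpace hf.relations :=
  Submodule.instOrthogonalCompleteSpace _

theorem IsBessel.mem_relations_iff (hf : IsBessel f B) {c : lp (fun _ : I => ℂ) 2} :
    c ∈ hf.relations ↔ ∀ g, ⟪hf.analysis g, c⟫_ℂ = 0 := by
  simp [IsBessel.relations, mem_orthogonal_span_iff]

theorem IsBessel.mem_relations_of_hasSum (hf : IsBessel f B) {c : lp (fun _ : I => ℂ) 2}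
    (hc : HasSum (fun i => c i • f i) 0) : c ∈ hf.relations :=
  hf.mem_relations_iff.2 fun g => by rw [hf.inner_analysis_eq_of_hasSum hc, inner_zero_right]

theorem IsBessel.eq_zero_of_mem_relations (hf : IsBessel f B) (hli : LinearIndependent ℂ f)
    {c : lp (fun _ : I => ℂ) 2} (hc : c ∈ hf.relations) (S : Finset I)
    (hS : ∀ i ∉ S, c i = 0) : c = 0 := by
  have hsum : HasSum (fun i => c i • f i) (∑ i ∈ S, c i • f i) :=
    hasSum_sum_of_ne_finset_zero fun i hi => by simp [hS i hi]
  have hzero : ∑ i ∈ S, c i • f i = 0 := ext_inner_left ℂ fun g => by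
    rw [← hf.inner_analysis_eq_of_hasSum hsum, hf.mem_relations_iff.1 hc g, inner_zero_right]
  ext i
  by_cases hi : i ∈ S
  · exact linearIndependent_iff'.1 hli S _ hzero i hi
  · exact hS i hi

theorem IsBessel.isOmegaIndep_restrict (hf : IsBessel f B) {P : Set I}
    (hP : ∀ i, projSingle hf.relations i ∈
      closure (span ℂ (projSingle hf.relations '' Pᶜ) : Set hf.relations)) :
    IsOmegaIndep (fun i : P => f i) := by
  intro c hc hsum i
  obtain ⟨c', hc'_val, hc'_off⟩ : ∃ c' : I → ℂ, (∀ j : P, c' j = c j) ∧ ∀ j ∉ P, c' j = 0 :=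
    ⟨extend Subtype.val c 0, Subtype.val_injective.extend_apply c 0,
      fun j hj => extend_apply' _ _ _ (by simpa using hj)⟩
  have hc'_sq : Summable fun j => ‖c' j‖ ^ 2 :=
    ⟨_, (hasSum_subtype_iff_of_support_subset (s := P) (support_subset_iff'.2 fun j hj => by
      simp [hc'_off j hj])).1 (by simpa [Function.comp_def, hc'_val] using hc.hasSum)⟩
  have hc'_sum : HasSum (fun j => c' j • f j) 0 :=
    (hasSum_subtype_iff_of_support_subset (s := P) (support_subset_iff'.2 fun j hj => by
      simp [hc'_off j hj])).1 (by simpa [Function.comp_def, hc'_val] using hsum)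
  let d : hf.relations :=
    ⟨⟨c', memℓp_gen (by simpa using hc'_sq)⟩, hf.mem_relations_of_hasSum hc'_sum⟩
  simpa [d, hc'_val] using coe_eq_zero_of_projSingle_mem_closure _ d hc'_off (hP i)

end Bessel

theorem stmt6_general {I : Type} [Countable I] (f : I → H)
    (hB : ∃ B > 0, IsBessel f B)
    (hli : LinearIndependent ℂ f) :
    ∃ I1 I2 : Set I, I1 ∪ I2 = Set.univ ∧ I1 ∩ I2 = ∅ ∧
      IsOmegaIndep (fun i : I1 => f (i : I)) ∧
      IsOmegaIndep (fun i : I2 => f (i : I)) := by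
  obtain ⟨B, -, hf⟩ := hB
  obtain ⟨A, hA⟩ := exists_set_mem_closure_span_and_compl (projSingle_mem_closure_span_compl
    hf.relations fun c hc S hS => hf.eq_zero_of_mem_relations hli hc S hS)
  exact ⟨A, Aᶜ, Set.union_compl_self A, Set.inter_compl_self A,
    hf.isOmegaIndep_restrict fun i => (hA i).2,
    hf.isOmegaIndep_restrict fun i => by simpa using (hA i).1⟩

theorem stmt6 [SeparableSpace H] {I : Type} [Countable I] (f : I → H)
    (hnorm : ∀ i, ‖f i‖ = 1) (hB : ∃ B > 0, IsBessel f B)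
    (hli : LinearIndependent ℂ f) :
    ∃ I1 I2 : Set I, I1 ∪ I2 = Set.univ ∧ I1 ∩ I2 = ∅ ∧
      IsOmegaIndep (fun i : I1 => f (i : I)) ∧
      IsOmegaIndep (fun i : I2 => f (i : I)) :=
  stmt6_general f hB hli
end
end

section
/- Let {f_i}_{i∈I} be a frame sequence in a Hilbert space H (a frame for its closed linear span) which is ω-independent for ℓ₂-sequences. Then {f_i}_{i∈I} is a Riesz basic sequence: there exist 0 < A ≤ B < ∞ with A Σ|c_i|² ≤ ‖Σ c_i f_i‖² ≤ B Σ|c_i|² for all (c_i) ∈ ℓ²(I). -/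
open scoped InnerProductSpace
open Submodule Topology TopologicalSpace

noncomputable section

variable {H : Type} [NormedAddCommGroup H] [InnerProductSpace ℂ H] [CompleteSpace H]

/-!
On the closed span `N` of the frame sequence, the analysis operator `U g = (⟪f i, g⟫)ᵢ` into `ℓ²`
is bounded below by `√A`, so its range is closed. Its adjoint is the synthesis operator
`c ↦ ∑ cᵢ fᵢ`, which ω-independence makes injective; hence `U` is onto `ℓ²`. Writing `c = U g`
gives `‖c‖² = ⟪U† c, g⟫ ≤ ‖U† c‖ ‖c‖ / √A`, the lower Riesz bound, while `‖U†‖ = ‖U‖ ≤ √B`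
gives the upper one.
-/

open scoped lp InnerProduct

theorem lp.norm_sq_eq_tsum {I : Type*} {E : I → Type*} [∀ i, NormedAddCommGroup (E i)]
    (u : lp E 2) : ‖u‖ ^ 2 = ∑' i, ‖u i‖ ^ 2 := by
  have h := lp.norm_rpow_eq_tsum (p := 2) (by norm_num) u
  norm_num at h
  exact_mod_cast h

theorem memℓp_two_iff_summable_sq {I : Type*} {E : I → Type*} [∀ i, NormedAddCommGroup (E i)]
    {c : ∀ i, E i} : Memℓp c 2 ↔ Summable fun i => ‖c i‖ ^ 2 := by
  rw [memℓp_gen_iff (by norm_num)]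
  norm_num

namespace ContinuousLinearMap

variable {𝕜 E F : Type*} [RCLike 𝕜] [NormedAddCommGroup E] [InnerProductSpace 𝕜 E]
  [CompleteSpace E] [NormedAddCommGroup F] [InnerProductSpace 𝕜 F] [CompleteSpace F]

/-- A bounded-below operator has closed range, and the orthogonal complement of its range is the
kernel of the adjoint. -/
theorem surjective_of_bounded_below_of_injective_adjoint {U : E →L[𝕜] F} {C : ℝ} (hC : 0 < C)
    (hU : ∀ x, C * ‖x‖ ≤ ‖U x‖) (h : Function.Injective (U†)) : Function.Surjective U := by
  have hanti : AntilipschitzWith ⟨C⁻¹, by positivity⟩ U := U.antilipschitz_of_bound fun x => by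
    change ‖x‖ ≤ C⁻¹ * ‖U x‖
    rw [inv_mul_eq_div, le_div_iff₀ hC, mul_comm]
    exact hU x
  have : CompleteSpace U.range :=
    (hanti.isClosed_range U.uniformContinuous).completeSpace_coe
  have hrange : U.rangeᗮ = ⊥ := by rw [orthogonal_range, LinearMap.ker_eq_bot]; exact h
  exact LinearMap.range_eq_top.1 (Submodule.orthogonal_eq_bot_iff.1 hrange)

theorem mul_norm_le_norm_adjoint_apply {U : E →L[𝕜] F} {C : ℝ} (hC : 0 < C)
    (hU : ∀ x, C * ‖x‖ ≤ ‖U x‖) (h : Function.Injective (U†)) (y : F) : C * ‖y‖ ≤ ‖(U†) y‖ := by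
  obtain ⟨x, rfl⟩ := surjective_of_bounded_below_of_injective_adjoint hC hU h y
  rcases eq_or_ne (U x) 0 with hy | hy
  · simp [hy]
  have hsq : ‖U x‖ ^ 2 ≤ ‖(U†) (U x)‖ * ‖x‖ := calc
    ‖U x‖ ^ 2 = RCLike.re ⟪(U†) (U x), x⟫_𝕜 := by
      rw [adjoint_inner_left, norm_sq_eq_re_inner (𝕜 := 𝕜)]
    _ ≤ ‖(U†) (U x)‖ * ‖x‖ := (RCLike.re_le_norm _).trans (norm_inner_le_norm (𝕜 := 𝕜) _ _)
  refine le_of_mul_le_mul_right ?_ (norm_pos_iff.2 hy)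
  calc C * ‖U x‖ * ‖U x‖ = C * ‖U x‖ ^ 2 := by ring
    _ ≤ C * (‖(U†) (U x)‖ * ‖x‖) := mul_le_mul_of_nonneg_left hsq hC.le
    _ = ‖(U†) (U x)‖ * (C * ‖x‖) := by ring
    _ ≤ ‖(U†) (U x)‖ * ‖U x‖ := by gcongr; exact hU x

end ContinuousLinearMap

section Frames

variable {E F : Type} [NormedAddCommGroup E] [InnerProductSpace ℂ E]
  [NormedAddCommGroup F] [InnerProductSpace ℂ F] {I : Type} {f : I → E}

theorem IsOmegaIndep.of_comp (L : E →L[ℂ] F) (h : IsOmegaIndep (L ∘ f)) : IsOmegaIndep f :=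
  fun c hc hsum => h c hc (by simpa using hsum.mapL L)

theorem IsRieszBasic.comp_linearIsometry (L : E →ₗᵢ[ℂ] F) (h : IsRieszBasic f) :
    IsRieszBasic (L ∘ f) := by
  obtain ⟨A, B, hA, hAB, hf⟩ := h
  refine ⟨A, B, hA, hAB, fun c hc => ?_⟩
  obtain ⟨v, hv, hlow, hup⟩ := hf c hc
  exact ⟨L v, by simpa using hv.mapL L.toContinuousLinearMap, by simpa using hlow,
    by simpa using hup⟩

theorem isRieszBasic_of_hasSum {T : ℓ²(I, ℂ) →L[ℂ] E} (hT : ∀ c, HasSum (fun i => c i • f i) (T c))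
    {C D : ℝ} (hC : 0 < C) (hCD : C ≤ D) (hlow : ∀ c, C * ‖c‖ ≤ ‖T c‖)
    (hup : ∀ c, ‖T c‖ ≤ D * ‖c‖) : IsRieszBasic f := by
  refine ⟨C ^ 2, D ^ 2, by positivity, by gcongr, fun c hc => ?_⟩
  let c' : ℓ²(I, ℂ) := ⟨c, memℓp_two_iff_summable_sq.2 hc⟩
  have hnorm : ∑' i, ‖c i‖ ^ 2 = ‖c'‖ ^ 2 := (lp.norm_sq_eq_tsum c').symm
  refine ⟨T c', hT c', ?_, ?_⟩ <;> rw [hnorm, ← mul_pow]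
  · exact pow_le_pow_left₀ (by positivity) (hlow c') 2
  · exact pow_le_pow_left₀ (norm_nonneg _) (hup c') 2

namespace IsBessel

variable {B : ℝ}

theorem summable (hf : IsBessel f B) (g : E) : Summable fun i => ‖⟪f i, g⟫_ℂ‖ ^ 2 :=
  summable_of_sum_le (fun _ => by positivity) fun s => by
    simpa only [norm_inner_symm] using hf g s

theorem tsum_le (hf : IsBessel f B) (g : E) : ∑' i, ‖⟪f i, g⟫_ℂ‖ ^ 2 ≤ B * ‖g‖ ^ 2 :=
  (hf.summable g).tsum_le_of_sum_le fun s => by simpa only [norm_inner_symm] using hf g s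

def analysis_s7 (hf : IsBessel f B) : E →L[ℂ] ℓ²(I, ℂ) :=
  LinearMap.mkContinuous
    { toFun := fun g => ⟨fun i => ⟪f i, g⟫_ℂ, memℓp_two_iff_summable_sq.2 (hf.summable g)⟩
      map_add' := fun g h => lp.ext <| funext fun i => inner_add_right _ _ _
      map_smul' := fun a g => lp.ext <| funext fun i => inner_smul_right _ _ _ }
    √B fun g => by
      have hsq : ‖(⟨fun i => ⟪f i, g⟫_ℂ, memℓp_two_iff_summable_sq.2 (hf.summable g)⟩ :
          ℓ²(I, ℂ))‖ ^ 2 ≤ B * ‖g‖ ^ 2 := (lp.norm_sq_eq_tsum _).trans_le (hf.tsum_le g)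
      refine (Real.le_sqrt_of_sq_le hsq).trans_eq ?_
      rw [Real.sqrt_mul' _ (sq_nonneg _), Real.sqrt_sq (norm_nonneg _)]

@[simp]
theorem analysis_apply (hf : IsBessel f B) (g : E) (i : I) : hf.analysis_s7 g i = ⟪f i, g⟫_ℂ := rfl

theorem norm_analysis_sq (hf : IsBessel f B) (g : E) :
    ‖hf.analysis_s7 g‖ ^ 2 = ∑' i, ‖⟪f i, g⟫_ℂ‖ ^ 2 :=
  lp.norm_sq_eq_tsum _

theorem norm_analysis_le (hf : IsBessel f B) : ‖hf.analysis_s7‖ ≤ √B :=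
  LinearMap.mkContinuous_norm_le _ (Real.sqrt_nonneg B) _

variable [CompleteSpace E]

theorem adjoint_analysis_single [DecidableEq I] (hf : IsBessel f B) (i : I) (a : ℂ) :
    (hf.analysis_s7†) (lp.single 2 i a) = a • f i :=
  ext_inner_right ℂ fun g => by
    rw [ContinuousLinearMap.adjoint_inner_left, lp.inner_single_left, analysis_apply,
      inner_smul_left, RCLike.inner_apply, mul_comm]

theorem hasSum_adjoint_analysis (hf : IsBessel f B) (c : ℓ²(I, ℂ)) :
    HasSum (fun i => c i • f i) ((hf.analysis_s7†) c) := by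
  classical
  simpa only [map_smul, adjoint_analysis_single] using
    (lp.hasSum_single (by norm_num) c).mapL (hf.analysis_s7†)

end IsBessel

theorem isRieszBasic_of_isBessel_of_isOmegaIndep [CompleteSpace E] {A B : ℝ} (hA : 0 < A)
    (hAB : A ≤ B) (hlow : ∀ g, A * ‖g‖ ^ 2 ≤ ∑' i, ‖⟪f i, g⟫_ℂ‖ ^ 2) (hf : IsBessel f B)
    (hω : IsOmegaIndep f) : IsRieszBasic f := by
  have hU : ∀ g, √A * ‖g‖ ≤ ‖hf.analysis_s7 g‖ := fun g => by
    rw [← Real.sqrt_sq (norm_nonneg (hf.analysis_s7 g)), hf.norm_analysis_sq,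
      ← Real.sqrt_sq (norm_nonneg g), ← Real.sqrt_mul hA.le]
    exact Real.sqrt_le_sqrt (hlow g)
  have hinj : Function.Injective (hf.analysis_s7†) := by
    refine (injective_iff_map_eq_zero _).2 fun c hc => lp.ext (funext ?_)
    refine hω c (memℓp_two_iff_summable_sq.1 (lp.memℓp c)) ?_
    simpa only [hc] using hf.hasSum_adjoint_analysis c
  refine isRieszBasic_of_hasSum hf.hasSum_adjoint_analysis (Real.sqrt_pos.2 hA)
    (Real.sqrt_le_sqrt hAB) (ContinuousLinearMap.mul_norm_le_norm_adjoint_apply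
      (Real.sqrt_pos.2 hA) hU hinj) fun c => (hf.analysis_s7†).le_of_opNorm_le ?_ c
  rw [LinearIsometryEquiv.norm_map]
  exact hf.norm_analysis_le

end Frames

theorem stmt7_general {I : Type} (f : I → H)
    (hfs : IsFrameSequence f) (hω : IsOmegaIndep f) :
    IsRieszBasic f := by
  obtain ⟨A, B, hA, hAB, hframe⟩ := hfs
  set N := (span ℂ (Set.range f)).topologicalClosure
  have : CompleteSpace N := (span ℂ (Set.range f)).isClosed_topologicalClosure.completeSpace_coe
  let f' : I → N := fun i => ⟨f i, le_topologicalClosure _ (subset_span ⟨i, rfl⟩)⟩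
  have hlow : ∀ g : N, A * ‖g‖ ^ 2 ≤ ∑' i, ‖⟪f' i, g⟫_ℂ‖ ^ 2 := fun g =>
    (hframe g g.2).2.1.trans_eq (tsum_congr fun i => by rw [norm_inner_symm]; rfl)
  have hf' : IsBessel f' B := fun g s =>
    ((hframe g g.2).1.sum_le_tsum s fun _ _ => by positivity).trans (hframe g g.2).2.2
  exact (isRieszBasic_of_isBessel_of_isOmegaIndep hA hAB hlow hf'
    (hω.of_comp N.subtypeL)).comp_linearIsometry N.subtypeₗᵢ

theorem stmt7 [SeparableSpace H] {I : Type} [Countable I] (f : I → H)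
    (hfs : IsFrameSequence f) (hω : IsOmegaIndep f) :
    IsRieszBasic f :=
  stmt7_general f hfs hω
end
end

section
/- Let {f_i}_{i=1}^∞ be a Bessel sequence with bound B in H, and let (a_i) ∈ ℓ² satisfy Σ_{i=1}^∞ a_i f_i = 0. For a partition of ℕ into consecutive blocks, let g_k = Σ_{i ∈ first k blocks} a_i f_i = −Σ_{i ∈ remaining blocks} a_i f_i, and let Q_k be the orthogonal projection onto the span of {f_i : i in the first k blocks}. Then ‖g_k‖ ≤ (Σ_{i in remaining blocks} |a_i|²)^{1/2} · (Σ_{i in remaining blocks} ‖Q_k f_i‖²)^{1/2}. -/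
open scoped InnerProductSpace
open Submodule Topology TopologicalSpace

noncomputable section

variable {H : Type} [NormedAddCommGroup H] [InnerProductSpace ℂ H] [CompleteSpace H]

/-!
Since `g` lies in `K = span {f i | i < n k}` and `Q k` is the orthogonal projection onto `K`,
`⟪g, f i⟫ = ⟪g, Q k (f i)⟫`. Pairing `g` with `-g = ∑_{i ≥ n k} a i • f i` thus gives
`‖g‖² ≤ ‖g‖ ∑_{i ≥ n k} ‖a i‖ ‖Q k (f i)‖`, and Cauchy–Schwarz finishes. The Bessel bound makes
`∑ ‖Q k (f i)‖²` finite (so that the `tsum` is not the junk value `0`): in an orthonormal basis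
`(e m)` of the finite-dimensional `K`, `‖Q k (f i)‖² = ∑ m, ‖⟪e m, f i⟫‖²`.
-/

section

variable {𝕜 E : Type*} [RCLike 𝕜] [NormedAddCommGroup E] [InnerProductSpace 𝕜 E]

lemma Submodule.eq_starProjection_of_isSymmetric {K : Submodule 𝕜 E} [K.HasOrthogonalProjection]
    (T : E →L[𝕜] E) (hmem : ∀ x, T x ∈ K) (hfix : ∀ x ∈ K, T x = x)
    (hsym : ∀ x y, ⟪T x, y⟫_𝕜 = ⟪x, T y⟫_𝕜) : T = K.starProjection := by
  ext x
  refine (K.eq_starProjection_of_mem_of_inner_eq_zero (hmem x) fun w hw => ?_).symm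
  rw [inner_sub_left, hsym, hfix w hw, sub_self]

lemma Submodule.norm_starProjection_sq_eq_sum {K : Submodule 𝕜 E} [K.HasOrthogonalProjection]
    {ι : Type*} [Fintype ι] (b : OrthonormalBasis ι 𝕜 K) (x : E) :
    ‖K.starProjection x‖ ^ 2 = ∑ m, ‖⟪(b m : E), x⟫_𝕜‖ ^ 2 := by
  rw [starProjection_apply, ← Submodule.coe_norm, ← b.sum_sq_norm_inner_right]
  simp only [inner_orthogonalProjectionOnto_eq_of_mem_left]

lemma norm_inner_sum_smul_le_sqrt_mul_sqrt {K : Submodule 𝕜 E} [K.HasOrthogonalProjection]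
    {g : E} (hg : g ∈ K) {ι : Type*} (c : ι → 𝕜) (v : ι → E) (s : Finset ι) :
    ‖⟪g, ∑ i ∈ s, c i • v i⟫_𝕜‖ ≤
      ‖g‖ * (√(∑ i ∈ s, ‖c i‖ ^ 2) * √(∑ i ∈ s, ‖K.starProjection (v i)‖ ^ 2)) := by
  have hproj : ∀ i, ⟪g, v i⟫_𝕜 = ⟪g, K.starProjection (v i)⟫_𝕜 := fun i => by
    rw [← K.inner_starProjection_left_eq_right, K.starProjection_eq_self_iff.mpr hg]
  calc ‖⟪g, ∑ i ∈ s, c i • v i⟫_𝕜‖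
      ≤ ∑ i ∈ s, ‖c i‖ * ‖⟪g, K.starProjection (v i)⟫_𝕜‖ := by
        simp only [inner_sum, inner_smul_right, hproj, ← norm_mul]
        exact norm_sum_le _ _
    _ ≤ ∑ i ∈ s, ‖c i‖ * (‖g‖ * ‖K.starProjection (v i)‖) := by
        gcongr
        exact norm_inner_le_norm _ _
    _ = ‖g‖ * ∑ i ∈ s, ‖c i‖ * ‖K.starProjection (v i)‖ := by
        simp only [Finset.mul_sum, mul_left_comm]
    _ ≤ _ := by
        gcongr
        exact Real.sum_mul_le_sqrt_mul_sqrt _ _ _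

lemma norm_le_sqrt_mul_sqrt_of_hasSum {K : Submodule 𝕜 E} [K.HasOrthogonalProjection] {g : E}
    (hg : g ∈ K) {ι : Type*} {c : ι → 𝕜} {v : ι → E} (hsum : HasSum (fun i => c i • v i) g)
    (hc : Summable fun i => ‖c i‖ ^ 2) (hv : Summable fun i => ‖K.starProjection (v i)‖ ^ 2) :
    ‖g‖ ≤ √(∑' i, ‖c i‖ ^ 2) * √(∑' i, ‖K.starProjection (v i)‖ ^ 2) := by
  have hbound : ∀ s : Finset ι, ‖⟪g, ∑ i ∈ s, c i • v i⟫_𝕜‖ ≤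
      ‖g‖ * (√(∑' i, ‖c i‖ ^ 2) * √(∑' i, ‖K.starProjection (v i)‖ ^ 2)) := fun s => by
    refine (norm_inner_sum_smul_le_sqrt_mul_sqrt hg c v s).trans ?_
    gcongr
    · exact hc.sum_le_tsum s fun i _ => by positivity
    · exact hv.sum_le_tsum s fun i _ => by positivity
  have hlim : ‖g‖ ^ 2 ≤ ‖g‖ * (√(∑' i, ‖c i‖ ^ 2) * √(∑' i, ‖K.starProjection (v i)‖ ^ 2)) := by
    -- `‖g‖² = ‖⟪g, g⟫‖` is the limit of the finite inner products bounded by `hbound`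
    rw [← inner_self_eq_norm_sq (𝕜 := 𝕜), inner_self_re_eq_norm]
    exact le_of_tendsto' (((innerSL 𝕜 g).continuous.tendsto g).comp hsum).norm hbound
  rcases (norm_nonneg g).eq_or_lt with hg0 | hg0
  · rw [← hg0]; positivity
  · exact le_of_mul_le_mul_left (by rwa [← sq]) hg0

end

lemma IsBessel.summable_norm_inner_sq {E I : Type} [NormedAddCommGroup E] [InnerProductSpace ℂ E]
    {f : I → E} {B : ℝ} (hf : IsBessel f B) (g : E) :
    Summable fun i => ‖⟪g, f i⟫_ℂ‖ ^ 2 :=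
  summable_of_sum_le (fun _ => by positivity) (hf g)

lemma IsBessel.summable_norm_starProjection_sq {E I : Type} [NormedAddCommGroup E]
    [InnerProductSpace ℂ E] {f : I → E} {B : ℝ} (hf : IsBessel f B)
    (K : Submodule ℂ E) [FiniteDimensional ℂ K] :
    Summable fun i => ‖K.starProjection (f i)‖ ^ 2 := by
  let b := stdOrthonormalBasis ℂ K
  simp only [K.norm_starProjection_sq_eq_sum b]
  exact summable_sum fun m _ => hf.summable_norm_inner_sq _

lemma HasSum.subtype_le_sub_sum_range {M : Type*} [AddCommGroup M] [TopologicalSpace M]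
    [IsTopologicalAddGroup M] {u : ℕ → M} {s : M} (h : HasSum u s) (n : ℕ) :
    HasSum (fun i : {i : ℕ // n ≤ i} => u i) (s - ∑ i ∈ Finset.range n, u i) := by
  have hcompl := ((Finset.range n).hasSum_compl_iff (f := u)
    (a := s - ∑ i ∈ Finset.range n, u i)).mpr (by rwa [sub_add_cancel])
  exact (Equiv.subtypeEquivRight fun i => by simp).hasSum_iff.mp hcompl

theorem stmt9_general (f : ℕ → H) (B : ℝ)
    (hf : IsBessel f B)
    (a : ℕ → ℂ) (ha2 : Summable fun i => ‖a i‖ ^ 2)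
    (hsum : HasSum (fun i => a i • f i) 0)
    (n : ℕ → ℕ)
    (Q : ℕ → H →L[ℂ] H)
    (hmem : ∀ k x, Q k x ∈ span ℂ (f '' {i | i < n k}))
    (hfix : ∀ k x, x ∈ span ℂ (f '' {i | i < n k}) → Q k x = x)
    (hsa : ∀ k x y, ⟪Q k x, y⟫_ℂ = ⟪x, Q k y⟫_ℂ)
    (k : ℕ) :
    ‖∑ i ∈ Finset.range (n k), a i • f i‖ ≤
      Real.sqrt (∑' i : {i : ℕ // n k ≤ i}, ‖a (i : ℕ)‖ ^ 2) *
      Real.sqrt (∑' i : {i : ℕ // n k ≤ i}, ‖Q k (f (i : ℕ))‖ ^ 2) := by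
  set K := span ℂ (f '' {i | i < n k})
  have : FiniteDimensional ℂ K :=
    FiniteDimensional.span_of_finite ℂ ((Set.finite_Iio (n k)).image f)
  rw [K.eq_starProjection_of_isSymmetric _ (hmem k) (hfix k) (hsa k)]
  have hg : -∑ i ∈ Finset.range (n k), a i • f i ∈ K := K.neg_mem <| K.sum_mem fun i hi =>
    K.smul_mem _ (subset_span ⟨i, Finset.mem_range.mp hi, rfl⟩)
  rw [← norm_neg]
  refine norm_le_sqrt_mul_sqrt_of_hasSum hg ?_ (ha2.subtype _)
    ((hf.summable_norm_starProjection_sq K).subtype _)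
  simpa only [zero_sub] using hsum.subtype_le_sub_sum_range (n k)

theorem stmt9 [SeparableSpace H] (f : ℕ → H) (B : ℝ) (hB : 0 < B)
    (hf : IsBessel f B)
    (a : ℕ → ℂ) (ha2 : Summable fun i => ‖a i‖ ^ 2)
    (hsum : HasSum (fun i => a i • f i) 0)
    (n : ℕ → ℕ) (hmono : StrictMono n) (h0 : n 0 = 0)
    (Q : ℕ → H →L[ℂ] H)
    (hmem : ∀ k x, Q k x ∈ span ℂ (f '' {i | i < n k}))
    (hfix : ∀ k x, x ∈ span ℂ (f '' {i | i < n k}) → Q k x = x)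
    (hsa : ∀ k x y, ⟪Q k x, y⟫_ℂ = ⟪x, Q k y⟫_ℂ)
    (k : ℕ) :
    ‖∑ i ∈ Finset.range (n k), a i • f i‖ ≤
      Real.sqrt (∑' i : {i : ℕ // n k ≤ i}, ‖a (i : ℕ)‖ ^ 2) *
      Real.sqrt (∑' i : {i : ℕ // n k ≤ i}, ‖Q k (f (i : ℕ))‖ ^ 2) :=
  stmt9_general f B hf a ha2 hsum n Q hmem hfix hsa k
end
end

section
/- Let {f_i}_{i=1}^∞ be a finitely linearly independent Bessel sequence in H and (a_i) ∈ ℓ² with Σ a_i f_i = 0. Suppose ℕ is partitioned into finite consecutive blocks T_1, T_2, … such that for each k, Σ_{i ∈ T_{k+1} ∪ T_{k+2} ∪ …} ‖Q_k f_i‖² < (ε/2^{2k}) δ_k, where Q_k is the orthogonal projection onto span{f_i : i ∈ T_1 ∪ … ∪ T_k}, δ_k > 0 is a lower Riesz bound for the finite family {f_i : i ∈ T_1 ∪ … ∪ T_k} (i.e., δ_k Σ|c_i|² ≤ ‖Σ c_i f_i‖² over this finite index set), and 0 < ε ≤ 1. Then a_i = 0 for all i. -/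
/-! Apply `Q k` to `∑ aᵢ fᵢ = 0`: since `Q k` fixes `f₀, …, f_{n k - 1}`, the partial sum
`∑_{i < n k} aᵢ fᵢ` equals `-∑_{i ≥ n k} aᵢ Q k fᵢ`, whose square norm is at most
`‖a‖² · ∑_{i ≥ n k} ‖Q k fᵢ‖² < ‖a‖² ε 4⁻ᵏ δ k` by Cauchy–Schwarz. The lower Riesz bound `δ k`
then gives `∑_{i < n k} |aᵢ|² ≤ ‖a‖² ε 4⁻ᵏ`, which tends to `0` while `n k → ∞`. -/

open scoped InnerProductSpace
open Submodule Topology TopologicalSpace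

noncomputable section

variable {H : Type} [NormedAddCommGroup H] [InnerProductSpace ℂ H] [CompleteSpace H]

open Filter Finset

theorem tsum_mul_sq_le_tsum_sq_mul_tsum_sq {ι : Type*} {x y : ι → ℝ} (hx : ∀ i, 0 ≤ x i)
    (hy : ∀ i, 0 ≤ y i) (hx2 : Summable fun i => x i ^ 2) (hy2 : Summable fun i => y i ^ 2) :
    Summable (fun i => x i * y i) ∧
      (∑' i, x i * y i) ^ 2 ≤ (∑' i, x i ^ 2) * ∑' i, y i ^ 2 := by
  have hx2' : Summable fun i => x i ^ (2 : ℝ) := by simpa only [Real.rpow_two] using hx2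
  have hy2' : Summable fun i => y i ^ (2 : ℝ) := by simpa only [Real.rpow_two] using hy2
  obtain ⟨hxy, hle⟩ := Real.summable_and_inner_le_Lp_mul_Lq_tsum_of_nonneg
    Real.HolderConjugate.two_two hx hy hx2' hy2'
  refine ⟨hxy, ?_⟩
  simp only [Real.rpow_two] at hle
  have hX : 0 ≤ ∑' i, x i ^ 2 := tsum_nonneg fun i => sq_nonneg _
  have hY : 0 ≤ ∑' i, y i ^ 2 := tsum_nonneg fun i => sq_nonneg _
  calc (∑' i, x i * y i) ^ 2
      ≤ ((∑' i, x i ^ 2) ^ (1 / 2 : ℝ) * (∑' i, y i ^ 2) ^ (1 / 2 : ℝ)) ^ 2 :=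
        pow_le_pow_left₀ (tsum_nonneg fun i => mul_nonneg (hx i) (hy i)) hle 2
    _ = (∑' i, x i ^ 2) * ∑' i, y i ^ 2 := by
        rw [mul_pow, ← Real.sqrt_eq_rpow, ← Real.sqrt_eq_rpow,
          Real.sq_sqrt hX, Real.sq_sqrt hY]

theorem norm_tsum_smul_sq_le {ι E : Type*} [NormedAddCommGroup E] [NormedSpace ℂ E]
    [CompleteSpace E] {a : ι → ℂ} {x : ι → E} (ha : Summable fun i => ‖a i‖ ^ 2)
    (hx : Summable fun i => ‖x i‖ ^ 2) :
    ‖∑' i, a i • x i‖ ^ 2 ≤ (∑' i, ‖a i‖ ^ 2) * ∑' i, ‖x i‖ ^ 2 := by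
  obtain ⟨hsummable, hCS⟩ := tsum_mul_sq_le_tsum_sq_mul_tsum_sq (fun i => norm_nonneg (a i))
    (fun i => norm_nonneg (x i)) ha hx
  have hnorm : ‖∑' i, a i • x i‖ ≤ ∑' i, ‖a i‖ * ‖x i‖ := by
    simpa only [norm_smul] using
      norm_tsum_le_tsum_norm (f := fun i => a i • x i) (by simpa only [norm_smul] using hsummable)
  exact (pow_le_pow_left₀ (norm_nonneg _) hnorm 2).trans hCS

section Bessel

variable {E : Type} [NormedAddCommGroup E] [InnerProductSpace ℂ E] {I : Type} {f : I → E}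
  {B : ℝ}

theorem IsBessel.summable_sq_norm_inner (hf : IsBessel f B) (g : E) :
    Summable fun i => ‖⟪g, f i⟫_ℂ‖ ^ 2 :=
  summable_of_sum_le (fun _ => sq_nonneg _) (hf g)

theorem OrthonormalBasis.sq_norm_apply_eq_sum {ι : Type*} [Fintype ι] {K : Submodule ℂ E}
    (e : OrthonormalBasis ι ℂ K) {P : E →L[ℂ] E} (hmem : ∀ x, P x ∈ K)
    (hfix : ∀ x ∈ K, P x = x) (hP : (P : E →ₗ[ℂ] E).IsSymmetric) (x : E) :
    ‖P x‖ ^ 2 = ∑ j, ‖⟪(e j : E), x⟫_ℂ‖ ^ 2 := by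
  rw [← Submodule.coe_norm ⟨P x, hmem x⟩, ← e.sum_sq_norm_inner_right]
  refine Finset.sum_congr rfl fun j _ => ?_
  change ‖⟪(e j : E), P x⟫_ℂ‖ ^ 2 = _
  rw [← ContinuousLinearMap.coe_coe P, ← hP, ContinuousLinearMap.coe_coe, hfix _ (e j).2]

theorem IsBessel.summable_sq_norm_apply (hf : IsBessel f B) {K : Submodule ℂ E}
    [FiniteDimensional ℂ K] {P : E →L[ℂ] E} (hmem : ∀ x, P x ∈ K) (hfix : ∀ x ∈ K, P x = x)
    (hP : (P : E →ₗ[ℂ] E).IsSymmetric) : Summable fun i => ‖P (f i)‖ ^ 2 := by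
  simp only [(stdOrthonormalBasis ℂ K).sq_norm_apply_eq_sum hmem hfix hP]
  exact summable_sum fun j _ => hf.summable_sq_norm_inner _

end Bessel

theorem sq_norm_sum_le_of_hasSum_eq_zero {ι E : Type*} [NormedAddCommGroup E] [NormedSpace ℂ E]
    [CompleteSpace E] {f : ι → E} {a : ι → ℂ} (ha : Summable fun i => ‖a i‖ ^ 2)
    (hsum : HasSum (fun i => a i • f i) 0) {P : E →L[ℂ] E}
    (hP : Summable fun i => ‖P (f i)‖ ^ 2) {s : Finset ι} (hfix : ∀ i ∈ s, P (f i) = f i) :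
    ‖∑ i ∈ s, a i • f i‖ ^ 2 ≤ (∑' i, ‖a i‖ ^ 2) * ∑' i : ↥((s : Set ι)ᶜ), ‖P (f i)‖ ^ 2 := by
  have hPsum : HasSum (fun i => a i • P (f i)) 0 := by simpa using P.hasSum hsum
  have hsplit : ∑ i ∈ s, a i • f i = -∑' i : ↥((s : Set ι)ᶜ), a i • P (f i) := by
    rw [eq_neg_iff_add_eq_zero, ← hPsum.tsum_eq, ← hPsum.summable.sum_add_tsum_compl]
    congr 1
    exact Finset.sum_congr rfl fun i hi => by rw [hfix i hi]
  rw [hsplit, norm_neg]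
  calc _ ≤ (∑' i : ↥((s : Set ι)ᶜ), ‖a i‖ ^ 2) * ∑' i : ↥((s : Set ι)ᶜ), ‖P (f i)‖ ^ 2 :=
        norm_tsum_smul_sq_le (ha.subtype _) (hP.subtype _)
    _ ≤ _ := mul_le_mul_of_nonneg_right (ha.tsum_subtype_le _ _ fun _ => sq_nonneg _)
        (tsum_nonneg fun _ => sq_nonneg _)

theorem eq_zero_of_sum_range_sq_norm_le {a : ℕ → ℂ} {n : ℕ → ℕ} (hn : Tendsto n atTop atTop)
    {u : ℕ → ℝ} (hu : Tendsto u atTop (𝓝 0))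
    (hle : ∀ k, ∑ i ∈ range (n k), ‖a i‖ ^ 2 ≤ u k) (i : ℕ) : a i = 0 := by
  have hbound : ∀ᶠ k in atTop, ‖a i‖ ^ 2 ≤ u k := by
    filter_upwards [hn.eventually_gt_atTop i] with k hk
    exact (single_le_sum (fun j _ => sq_nonneg ‖a j‖) (mem_range.2 hk)).trans (hle k)
  simpa using le_antisymm (ge_of_tendsto hu hbound) (sq_nonneg _)

theorem stmt10_general (f : ℕ → H) (B : ℝ)
    (hf : IsBessel f B)
    (a : ℕ → ℂ) (ha2 : Summable fun i => ‖a i‖ ^ 2)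
    (hsum : HasSum (fun i => a i • f i) 0)
    (n : ℕ → ℕ) (hmono : StrictMono n)
    (Q : ℕ → H →L[ℂ] H)
    (hmem : ∀ k x, Q k x ∈ span ℂ (f '' {i | i < n k}))
    (hfix : ∀ k x, x ∈ span ℂ (f '' {i | i < n k}) → Q k x = x)
    (hsa : ∀ k x y, ⟪Q k x, y⟫_ℂ = ⟪x, Q k y⟫_ℂ)
    (δ : ℕ → ℝ) (hδpos : ∀ k, 0 < δ k)
    (hδ : ∀ k (c : ℕ → ℂ),
      δ k * ∑ i ∈ Finset.range (n k), ‖c i‖ ^ 2 ≤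
        ‖∑ i ∈ Finset.range (n k), c i • f i‖ ^ 2)
    (ε : ℝ)
    (hQ : ∀ k, (∑' i : {i : ℕ // n k ≤ i}, ‖Q k (f (i : ℕ))‖ ^ 2)
      < ε / 2 ^ (2 * k) * δ k) :
    ∀ i, a i = 0 := by
  set S := ∑' i, ‖a i‖ ^ 2
  have hgeom : Tendsto (fun k : ℕ => S * (ε / 2 ^ (2 * k))) atTop (𝓝 0) := by
    have h4 : Tendsto (fun k : ℕ => (2 : ℝ) ^ (2 * k)) atTop atTop :=
      (tendsto_pow_atTop_atTop_of_one_lt one_lt_two).comp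
        (tendsto_id.const_mul_atTop' two_pos)
    simpa using tendsto_const_nhds.mul (tendsto_const_nhds.div_atTop h4)
  refine eq_zero_of_sum_range_sq_norm_le hmono.tendsto_atTop hgeom fun k => ?_
  have : FiniteDimensional ℂ (span ℂ (f '' {i | i < n k})) :=
    FiniteDimensional.span_of_finite ℂ ((Set.finite_Iio _).image f)
  have hQf : Summable fun i => ‖Q k (f i)‖ ^ 2 :=
    hf.summable_sq_norm_apply (hmem k) (hfix k) (hsa k)
  have hpartial := sq_norm_sum_le_of_hasSum_eq_zero ha2 hsum hQf (s := range (n k))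
    fun i hi => hfix k _ (subset_span ⟨i, mem_range.1 hi, rfl⟩)
  rw [coe_range, Set.compl_Iio] at hpartial
  refine le_of_mul_le_mul_left ?_ (hδpos k)
  calc δ k * ∑ i ∈ range (n k), ‖a i‖ ^ 2
      ≤ ‖∑ i ∈ range (n k), a i • f i‖ ^ 2 := hδ k a
    _ ≤ S * (ε / 2 ^ (2 * k) * δ k) :=
        hpartial.trans (mul_le_mul_of_nonneg_left (hQ k).le (tsum_nonneg fun _ => sq_nonneg _))
    _ = δ k * (S * (ε / 2 ^ (2 * k))) := by ring

theorem stmt10 [SeparableSpace H] (f : ℕ → H) (B : ℝ) (hB : 0 < B)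
    (hf : IsBessel f B) (hli : LinearIndependent ℂ f)
    (a : ℕ → ℂ) (ha2 : Summable fun i => ‖a i‖ ^ 2)
    (hsum : HasSum (fun i => a i • f i) 0)
    (n : ℕ → ℕ) (hmono : StrictMono n) (h0 : n 0 = 0)
    (Q : ℕ → H →L[ℂ] H)
    (hmem : ∀ k x, Q k x ∈ span ℂ (f '' {i | i < n k}))
    (hfix : ∀ k x, x ∈ span ℂ (f '' {i | i < n k}) → Q k x = x)
    (hsa : ∀ k x y, ⟪Q k x, y⟫_ℂ = ⟪x, Q k y⟫_ℂ)
    (δ : ℕ → ℝ) (hδpos : ∀ k, 0 < δ k)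
    (hδ : ∀ k (c : ℕ → ℂ),
      δ k * ∑ i ∈ Finset.range (n k), ‖c i‖ ^ 2 ≤
        ‖∑ i ∈ Finset.range (n k), c i • f i‖ ^ 2)
    (ε : ℝ) (hε : 0 < ε) (hε1 : ε ≤ 1)
    (hQ : ∀ k, (∑' i : {i : ℕ // n k ≤ i}, ‖Q k (f (i : ℕ))‖ ^ 2)
      < ε / 2 ^ (2 * k) * δ k) :
    ∀ i, a i = 0 :=
  stmt10_general f B hf a ha2 hsum n hmono Q hmem hfix hsa δ hδpos hδ ε hQ
end
end

section
/- Let {g_i}_{i∈I} be a sequence in H possessing a finite orthogonal decomposition with partition {I_j}_{j=1}^∞ of I into finite sets, and suppose for each j the finite family {g_i}_{i∈I_j} is linearly independent. Then {g_i}_{i∈I} is ω-independent for ℓ₂-sequences: if (c_i) ∈ ℓ²(I) and Σ_{i∈I} c_i g_i = 0, then c = 0. -/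
open scoped InnerProductSpace
open Submodule Topology TopologicalSpace

noncomputable section

variable {H : Type} [NormedAddCommGroup H] [InnerProductSpace ℂ H] [CompleteSpace H]

/- Pairing the convergent series `∑ cᵢ gᵢ = 0` with the partial sum `v` over one block kills
every term outside the block, by orthogonality, so `‖v‖² = 0`; linear independence inside the
block then forces the coefficients there to vanish. -/

theorem Finset.sum_eq_zero_of_hasSum_zero_of_inner_eq_zero {𝕜 E ι : Type*} [RCLike 𝕜]
    [NormedAddCommGroup E] [InnerProductSpace 𝕜 E] {f : ι → E} (hf : HasSum f 0)
    (s : Finset ι) (horth : ∀ i ∈ s, ∀ j ∉ s, ⟪f i, f j⟫_𝕜 = 0) :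
    ∑ i ∈ s, f i = 0 := by
  set v := ∑ i ∈ s, f i
  have hzero : HasSum (fun j => ⟪v, f j⟫_𝕜) 0 := by
    simpa using (innerSL 𝕜 v).hasSum hf
  have hnorm : HasSum (fun j => ⟪v, f j⟫_𝕜) ⟪v, v⟫_𝕜 := by
    rw [show ⟪v, v⟫_𝕜 = ∑ j ∈ s, ⟪v, f j⟫_𝕜 from inner_sum _ _ _]
    refine hasSum_sum_of_ne_finset_zero fun j hj => ?_
    simp only [v, sum_inner]
    exact Finset.sum_eq_zero fun i hi => horth i hi j hj
  exact inner_self_eq_zero.mp (hnorm.unique hzero)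

theorem stmt13_general {I : Type} (g : I → H)
    (Pa : ℕ → Set I) (hpart : ∀ i, ∃! j, i ∈ Pa j) (hfin : ∀ j, (Pa j).Finite)
    (horth : ∀ j k, j ≠ k → ∀ x ∈ span ℂ (g '' Pa j), ∀ y ∈ span ℂ (g '' Pa k),
      ⟪x, y⟫_ℂ = 0)
    (hli : ∀ j, LinearIndependent ℂ (fun i : Pa j => g (i : I))) :
    IsOmegaIndep g := by
  intro c _ hsum i
  obtain ⟨j, hij, -⟩ := hpart i
  have hmem : ∀ {k : ℕ} {a : I} (x : ℂ), a ∈ Pa k → x • g a ∈ span ℂ (g '' Pa k) := fun x ha =>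
    smul_mem _ x (subset_span ⟨_, ha, rfl⟩)
  have hblock : ∑ a ∈ (hfin j).toFinset, c a • g a = 0 := by
    refine Finset.sum_eq_zero_of_hasSum_zero_of_inner_eq_zero (𝕜 := ℂ) hsum _
      fun a ha b hb => ?_
    obtain ⟨k, hbk, -⟩ := hpart b
    have hjk : j ≠ k := by rintro rfl; exact hb ((hfin j).mem_toFinset.mpr hbk)
    exact horth j k hjk _ (hmem _ ((hfin j).mem_toFinset.mp ha)) _ (hmem _ hbk)
  have hli' : LinearIndepOn ℂ g ((hfin j).toFinset : Set I) := by
    rw [Set.Finite.coe_toFinset]; exact hli j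
  exact linearIndepOn_finset_iff.mp hli' c hblock i ((hfin j).mem_toFinset.mpr hij)

theorem stmt13 [SeparableSpace H] {I : Type} [Countable I] (g : I → H)
    (Pa : ℕ → Set I) (hpart : ∀ i, ∃! j, i ∈ Pa j) (hfin : ∀ j, (Pa j).Finite)
    (horth : ∀ j k, j ≠ k → ∀ x ∈ span ℂ (g '' Pa j), ∀ y ∈ span ℂ (g '' Pa k),
      ⟪x, y⟫_ℂ = 0)
    (hli : ∀ j, LinearIndependent ℂ (fun i : Pa j => g (i : I))) :
    IsOmegaIndep g :=
  stmt13_general g Pa hpart hfin horth hli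
end
end
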